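/- Let d ≥ 1, let w ∈ {0,1}^d contain an even number of 1s, let ℝ_w be the corresponding open orthant of ℝ^d, and let f : ℝ_w → ℝ be componentwise subadditive and Lebesgue measurable. Then the limit of f(x_1,…,x_d)/(x_1⋯x_d) along the directed set ℛ_w (each coordinate x_i tending to +∞ if w_i = 0 and to −∞ if w_i = 1, with the corresponding product order) exists and equals inf_{(x_1,…,x_d) ∈ ℝ_w} f(x_1,…,x_d)/(x_1⋯x_d); this value is not +∞ but can be −∞. -/

import Mathlib

/-!
Reflecting the coordinates with `w i = true` maps `ℝ_w` onto the positive orthant and, the number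
of sign changes being even, leaves `∏ xᵢ` unchanged; so it suffices to treat the positive orthant.

There, subadditivity in each coordinate gives, for `x = n y + r` coordinatewise with `nᵢ ∈ ℕ` and
`rᵢ ∈ [yᵢ, 2yᵢ]`,
`f x ≤ ∑_S (∏_{i ∈ S} nᵢ) f (y on S, r off S) ≤ (∏ nᵢ) f y + M (∏ (nᵢ + 1) - ∏ nᵢ)`,
where `M` bounds `f` above on the box `[y, 2y]`. Dividing by `∏ xᵢ` and letting `x → ∞` gives
`limsup f x / ∏ xᵢ ≤ f y / ∏ yᵢ`, while `liminf ≥ inf` is trivial.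

The bound `M` comes from measurability. If `f z` is huge, then for every `t` in the box `(0, z)`
subadditivity applied to `z = t + (z - t)` yields some `S` with
`f (t on S, z - t off S) ≥ f z / 2^d`; these maps are measure preserving, so the superlevel set
`{f ≥ f z / 2^d}` has measure at least `2^{-d} vol (0, z)`. If `f` were unbounded on `[a, b]`,
the sets `{f ≥ k} ∩ (0, b)` would thus have measure bounded below, although they decrease to `∅`.
-/

open Filter MeasureTheory Topology Function

theorem tendsto_coe_biInf_of_eventually_lt {α : Type*} {l : Filter α} {v : α → ℝ} {s : Set α}
    (hs : ∀ᶠ x in l, x ∈ s) (hv : ∀ y ∈ s, ∀ c : ℝ, v y < c → ∀ᶠ x in l, v x < c) :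
    Tendsto (fun x => (v x : EReal)) l (𝓝 (⨅ x ∈ s, (v x : EReal))) := by
  rw [tendsto_order]
  refine ⟨fun e he => hs.mono fun x hx => he.trans_le (biInf_le _ hx), fun e he => ?_⟩
  obtain ⟨y, hy⟩ := iInf_lt_iff.1 he
  obtain ⟨hys, hye⟩ := iInf_lt_iff.1 hy
  obtain ⟨c, hyc, hce⟩ := EReal.lt_iff_exists_real_btwn.1 hye
  exact (hv y hys c (EReal.coe_lt_coe_iff.1 hyc)).mono fun x hx =>
    (EReal.coe_lt_coe_iff.2 hx).trans hce

theorem natCast_mul_add_le_of_subadditive {g : ℝ → ℝ}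
    (hg : ∀ s t, 0 < s → 0 < t → g (s + t) ≤ g s + g t) {y r : ℝ} (hy : 0 < y) (hr : 0 < r)
    (n : ℕ) : g (n * y + r) ≤ n * g y + g r := by
  induction n with
  | zero => simp
  | succ n ih =>
    calc g ((n + 1 : ℕ) * y + r) = g (y + (n * y + r)) := by push_cast; ring_nf
      _ ≤ g y + g (n * y + r) := hg _ _ hy (by positivity)
      _ ≤ (n + 1 : ℕ) * g y + g r := by push_cast; linarith

theorem sub_natFloor_div_sub_one_mul_mem_Icc {y t : ℝ} (hy : 0 < y) (hyt : y ≤ t) :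
    t - ⌊t / y - 1⌋₊ * y ∈ Set.Icc y (2 * y) := by
  have ha : 0 ≤ t / y - 1 := by rw [sub_nonneg, le_div_iff₀ hy]; linarith
  have h1 : ((⌊t / y - 1⌋₊ : ℝ) + 1) * y ≤ t := (le_div_iff₀ hy).1 (by linarith [Nat.floor_le ha])
  have h2 : t < ((⌊t / y - 1⌋₊ : ℝ) + 2) * y :=
    (div_lt_iff₀ hy).1 (by linarith [Nat.lt_floor_add_one (t / y - 1)])
  constructor <;> linarith

theorem tendsto_natFloor_div_sub_one_div_atTop {y : ℝ} (hy : 0 < y) :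
    Tendsto (fun t => (⌊t / y - 1⌋₊ : ℝ) / t) atTop (𝓝 y⁻¹) := by
  have hlow : Tendsto (fun t : ℝ => y⁻¹ - 2 * t⁻¹) atTop (𝓝 y⁻¹) := by
    simpa using tendsto_const_nhds.sub ((tendsto_inv_atTop_zero (𝕜 := ℝ)).const_mul 2)
  refine tendsto_of_tendsto_of_tendsto_of_le_of_le' hlow tendsto_const_nhds ?_ ?_ <;>
    filter_upwards [eventually_ge_atTop y] with t ht <;>
    obtain ⟨h1, h2⟩ := sub_natFloor_div_sub_one_mul_mem_Icc hy ht <;>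
    have ht0 : 0 < t := hy.trans_le ht
  · have : (y⁻¹ - 2 * t⁻¹) * t = t / y - 2 := by field_simp
    rw [le_div_iff₀ ht0, this, sub_le_iff_le_add, div_le_iff₀ hy]
    linarith
  · rw [div_le_iff₀ ht0, inv_mul_eq_div, le_div_iff₀ hy]
    linarith

theorem tendsto_measure_inter_setOf_natCast_le {α : Type*} [MeasurableSpace α] {μ : Measure α}
    {s : Set α} {g : α → ℝ} (hs : MeasurableSet s) (hμs : μ s ≠ ⊤)
    (hg : AEMeasurable g (μ.restrict s)) :
    Tendsto (fun k : ℕ => μ (s ∩ {x | k ≤ g x})) atTop (𝓝 0) := by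
  have hanti : Antitone fun k : ℕ => g ⁻¹' Set.Ici (k : ℝ) := fun k l hkl =>
    Set.preimage_mono (Set.Ici_subset_Ici.2 (Nat.cast_le.2 hkl))
  have hempty : ⋂ k : ℕ, g ⁻¹' Set.Ici (k : ℝ) = ∅ :=
    Set.eq_empty_of_forall_notMem fun x hx => by
      obtain ⟨k, hk⟩ := exists_nat_gt (g x)
      exact (Set.mem_Ici.1 (Set.mem_iInter.1 hx k)).not_gt hk
  have := tendsto_measure_iInter_atTop (μ := μ.restrict s)
    (fun k => hg.nullMeasurable measurableSet_Ici) hanti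
    ⟨0, (measure_mono (Set.subset_univ _)).trans_lt (by simpa using hμs.lt_top) |>.ne⟩
  rw [hempty, measure_empty] at this
  exact this.congr fun k => by rw [comp_apply, Measure.restrict_apply' hs, Set.inter_comm]; rfl

def posOrthant (ι : Type*) : Set (ι → ℝ) := {x | ∀ i, 0 < x i}

def openBox {ι : Type*} (x : ι → ℝ) : Set (ι → ℝ) := Set.univ.pi fun i => Set.Ioo 0 (x i)

theorem openBox_mono {ι : Type*} {x y : ι → ℝ} (hxy : x ≤ y) : openBox x ⊆ openBox y :=
  fun _ ht i _ => ⟨(ht i trivial).1, (ht i trivial).2.trans_le (hxy i)⟩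

section Subadditive

variable {ι : Type*} [DecidableEq ι]

theorem update_mem_posOrthant {x : ι → ℝ} (hx : x ∈ posOrthant ι) (i : ι) {a : ℝ} (ha : 0 < a) :
    update x i a ∈ posOrthant ι :=
  (forall_update_iff x fun _ b => 0 < b).2 ⟨ha, fun j _ => hx j⟩

theorem piecewise_mem_posOrthant (S : Finset ι) {x y : ι → ℝ} (hx : x ∈ posOrthant ι)
    (hy : y ∈ posOrthant ι) : S.piecewise x y ∈ posOrthant ι := fun i => by
  by_cases h : i ∈ S <;> simp [h, hx i, hy i]

def ComponentwiseSubadditive (f : (ι → ℝ) → ℝ) : Prop :=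
  ∀ (i : ι) (x : ι → ℝ) (y : ℝ), x ∈ posOrthant ι → 0 < y →
    f (update x i (x i + y)) ≤ f x + f (update x i y)

variable {f : (ι → ℝ) → ℝ}

theorem ComponentwiseSubadditive.update_natCast_mul_add_le (hf : ComponentwiseSubadditive f)
    {x : ι → ℝ} (hx : x ∈ posOrthant ι) (i : ι) {y r : ℝ} (hy : 0 < y) (hr : 0 < r) (n : ℕ) :
    f (update x i (n * y + r)) ≤ n * f (update x i y) + f (update x i r) :=
  natCast_mul_add_le_of_subadditive (g := fun t => f (update x i t))
    (fun s t hs ht => by simpa using hf i (update x i s) t (update_mem_posOrthant hx i hs) ht)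
    hy hr n

theorem ComponentwiseSubadditive.le_sum_powerset_piecewise (hf : ComponentwiseSubadditive f)
    (n : ι → ℕ) {y r : ι → ℝ} (hy : y ∈ posOrthant ι) (hr : r ∈ posOrthant ι) (T : Finset ι)
    {x : ι → ℝ} (hx : x ∈ posOrthant ι) :
    f (T.piecewise (fun i => n i * y i + r i) x) ≤
      ∑ S ∈ T.powerset, (∏ i ∈ S, (n i : ℝ)) * f (S.piecewise y (T.piecewise r x)) := by
  induction T using Finset.induction_on generalizing x with
  | empty => simp
  | insert j T hj ih =>
    rw [Finset.piecewise_insert, Finset.update_piecewise_of_notMem _ _ _ hj,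
      Finset.sum_powerset_insert hj, ← Finset.sum_add_distrib]
    refine (ih (update_mem_posOrthant hx j
      (add_pos_of_nonneg_of_pos (mul_nonneg (Nat.cast_nonneg _) (hy j).le) (hr j)))).trans
      (Finset.sum_le_sum fun S hS => ?_)
    have hjS : j ∉ S := fun h => hj (Finset.mem_powerset.1 hS h)
    set z := S.piecewise y (T.piecewise r x)
    have hz : z ∈ posOrthant ι :=
      piecewise_mem_posOrthant S hy (piecewise_mem_posOrthant T hr hx)
    have hupd : ∀ a, S.piecewise y (update (T.piecewise r x) j a) = update z j a := fun a =>
      (Finset.update_piecewise_of_notMem _ _ _ hjS _).symm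
    rw [← Finset.update_piecewise_of_notMem _ _ _ hj, Finset.piecewise_insert,
      Finset.piecewise_insert, hupd, hupd, update_idem, Finset.prod_insert hjS]
    calc (∏ i ∈ S, (n i : ℝ)) * f (update z j (n j * y j + r j))
        ≤ (∏ i ∈ S, (n i : ℝ)) * (n j * f (update z j (y j)) + f (update z j (r j))) :=
          mul_le_mul_of_nonneg_left (hf.update_natCast_mul_add_le hz j (hy j) (hr j) (n j))
            (by positivity)
      _ = _ := by ring

variable [Fintype ι]

theorem ComponentwiseSubadditive.le_sum_piecewise (hf : ComponentwiseSubadditive f)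
    (n : ι → ℕ) {y r : ι → ℝ} (hy : y ∈ posOrthant ι) (hr : r ∈ posOrthant ι) :
    f (fun i => n i * y i + r i) ≤ ∑ S : Finset ι, (∏ i ∈ S, (n i : ℝ)) * f (S.piecewise y r) := by
  simpa [Finset.powerset_univ] using hf.le_sum_powerset_piecewise n hy hr Finset.univ hr

theorem ComponentwiseSubadditive.le_prod_mul_add_mul (hf : ComponentwiseSubadditive f)
    (n : ι → ℕ) {y r : ι → ℝ} (hy : y ∈ posOrthant ι) (hr : r ∈ posOrthant ι) {M : ℝ}
    (hM : ∀ S ≠ Finset.univ, f (S.piecewise y r) ≤ M) :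
    f (fun i => n i * y i + r i) ≤
      (∏ i, (n i : ℝ)) * f y + M * (∏ i, ((n i : ℝ) + 1) - ∏ i, (n i : ℝ)) := by
  have hQ : ∏ i, ((n i : ℝ) + 1) = ∑ S : Finset ι, ∏ i ∈ S, (n i : ℝ) := by
    rw [Finset.prod_add_one, Finset.powerset_univ]
  calc f (fun i => n i * y i + r i)
      ≤ ∑ S : Finset ι, (∏ i ∈ S, (n i : ℝ)) * f (S.piecewise y r) := hf.le_sum_piecewise n hy hr
    _ = (∏ i, (n i : ℝ)) * f y +
        ∑ S ∈ Finset.univ.erase Finset.univ, (∏ i ∈ S, (n i : ℝ)) * f (S.piecewise y r) := by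
      rw [← Finset.add_sum_erase _ _ (Finset.mem_univ Finset.univ), Finset.piecewise_univ]
    _ ≤ (∏ i, (n i : ℝ)) * f y +
        ∑ S ∈ Finset.univ.erase Finset.univ, (∏ i ∈ S, (n i : ℝ)) * M := by
      gcongr with S hS
      exact hM S (Finset.ne_of_mem_erase hS)
    _ = _ := by
      rw [← Finset.sum_mul, hQ, ← Finset.add_sum_erase _ _ (Finset.mem_univ Finset.univ)]
      ring

theorem ComponentwiseSubadditive.volume_openBox_le_two_pow_mul (hf : ComponentwiseSubadditive f)
    (x : ι → ℝ) :
    volume (openBox x) ≤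
      2 ^ Fintype.card ι * volume {t ∈ openBox x | f x / 2 ^ Fintype.card ι ≤ f t} := by
  set E := {t ∈ openBox x | f x / 2 ^ Fintype.card ι ≤ f t}
  have hpreserving : ∀ S : Finset ι, MeasurePreserving (fun t => S.piecewise t (x - t)) :=
    fun S => volume_preserving_pi (f := fun i u => if i ∈ S then u else x i - u) fun i => by
      by_cases h : i ∈ S
      · simp only [h, if_true]
        exact MeasurePreserving.id volume
      · simpa [h] using Measure.measurePreserving_sub_left volume (x i)
  have hcover : openBox x ⊆ ⋃ S : Finset ι, (fun t => S.piecewise t (x - t)) ⁻¹' E := by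
    intro t ht
    have htx : ∀ i, 0 < t i ∧ t i < x i := fun i => ht i (Set.mem_univ i)
    have hsplit := hf.le_sum_piecewise (fun _ => 1) (fun i => (htx i).1)
      (r := x - t) (fun i => sub_pos.2 (htx i).2)
    simp only [Nat.cast_one, one_mul, Finset.prod_const_one, Pi.sub_apply, add_sub_cancel] at hsplit
    obtain ⟨S, -, hS⟩ := Finset.exists_le_of_sum_le Finset.univ_nonempty
      (f := fun _ => f x / 2 ^ Fintype.card ι) (hsplit.trans_eq' <| by
        rw [Finset.sum_const, Finset.card_univ, Fintype.card_finset, nsmul_eq_mul]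
        push_cast
        field_simp)
    refine Set.mem_iUnion.2 ⟨S, fun i _ => ?_, hS⟩
    by_cases h : i ∈ S
    · simpa [h] using htx i
    · simpa [h, and_comm] using htx i
  calc volume (openBox x) ≤ ∑ S : Finset ι, volume ((fun t => S.piecewise t (x - t)) ⁻¹' E) :=
        (measure_mono hcover).trans (measure_iUnion_fintype_le _ _)
    _ ≤ ∑ _S : Finset ι, volume E :=
        Finset.sum_le_sum fun S _ => (hpreserving S).measure_preimage_le E
    _ = 2 ^ Fintype.card ι * volume E := by
      rw [Finset.sum_const, Finset.card_univ, Fintype.card_finset, nsmul_eq_mul]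
      push_cast
      rfl

theorem ComponentwiseSubadditive.bddAbove_image_Icc (hf : ComponentwiseSubadditive f)
    (hmeas : AEMeasurable f (volume.restrict (posOrthant ι))) {a : ι → ℝ}
    (ha : a ∈ posOrthant ι) (b : ι → ℝ) : BddAbove (f '' Set.Icc a b) := by
  have hsmall := tendsto_measure_inter_setOf_natCast_le (μ := volume) (s := openBox b)
    (MeasurableSet.univ_pi fun i => measurableSet_Ioo)
    (by simp [openBox, Real.volume_pi_Ioo, ENNReal.prod_ne_top])
    (hmeas.mono_set fun t ht i => (ht i trivial).1)
  have hpos : 0 < volume (openBox a) := by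
    rw [pos_iff_ne_zero, openBox, Real.volume_pi_Ioo, Finset.prod_ne_zero_iff]
    exact fun i _ => by simpa using ha i
  have hlim := ENNReal.Tendsto.const_mul (a := 2 ^ Fintype.card ι) hsmall (Or.inr (by simp))
  rw [mul_zero] at hlim
  obtain ⟨k, hk⟩ := (hlim.eventually (gt_mem_nhds hpos)).exists
  refine ⟨2 ^ Fintype.card ι * k, ?_⟩
  rintro _ ⟨z, hz, rfl⟩
  by_contra! hzk
  refine hk.not_ge ?_
  calc volume (openBox a) ≤ volume (openBox z) := measure_mono (openBox_mono hz.1)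
    _ ≤ _ := hf.volume_openBox_le_two_pow_mul z
    _ ≤ _ := by
      gcongr
      exact fun t ht => ⟨openBox_mono hz.2 ht.1,
        ((le_div_iff₀' (by positivity)).2 hzk.le).trans ht.2⟩

theorem ComponentwiseSubadditive.div_prod_le (hf : ComponentwiseSubadditive f) {y : ι → ℝ}
    (hy : y ∈ posOrthant ι) {M : ℝ} (hM : M ∈ upperBounds (f '' Set.Icc y (2 * y))) (n : ι → ℕ)
    {x : ι → ℝ} (hx : ∀ i, x i - n i * y i ∈ Set.Icc (y i) (2 * y i)) :
    f x / ∏ i, x i ≤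
      (∏ i, (n i : ℝ) / x i) * f y + M * (∏ i, ((n i : ℝ) + 1) / x i - ∏ i, (n i : ℝ) / x i) := by
  set r : ι → ℝ := fun i => x i - n i * y i
  have hr : r ∈ posOrthant ι := fun i => (hy i).trans_le (hx i).1
  have hX : 0 < ∏ i, x i := Finset.prod_pos fun i _ =>
    (hr i).trans_le (sub_le_self _ (mul_nonneg (Nat.cast_nonneg _) (hy i).le))
  have hy2 : y ∈ Set.Icc y (2 * y) := ⟨le_rfl, fun i => le_mul_of_one_le_left (hy i).le one_le_two⟩
  have key := hf.le_prod_mul_add_mul n hy hr fun S _ =>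
    hM ⟨_, S.piecewise_mem_Icc_of_mem_of_mem hy2 ⟨fun i => (hx i).1, fun i => (hx i).2⟩, rfl⟩
  have hxr : (fun i => (n i : ℝ) * y i + r i) = x := funext fun i => by simp only [r]; ring
  rw [hxr] at key
  calc f x / ∏ i, x i
      ≤ ((∏ i, (n i : ℝ)) * f y + M * (∏ i, ((n i : ℝ) + 1) - ∏ i, (n i : ℝ))) / ∏ i, x i :=
        div_le_div_of_nonneg_right key hX.le
    _ = _ := by rw [Finset.prod_div_distrib, Finset.prod_div_distrib]; ring

theorem ComponentwiseSubadditive.eventually_div_prod_lt (hf : ComponentwiseSubadditive f)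
    (hmeas : AEMeasurable f (volume.restrict (posOrthant ι))) {y : ι → ℝ}
    (hy : y ∈ posOrthant ι) {c : ℝ} (hc : f y / ∏ i, y i < c) :
    ∀ᶠ x in Filter.pi fun _ => atTop, f x / ∏ i, x i < c := by
  obtain ⟨M, hM⟩ := hf.bddAbove_image_Icc hmeas hy (2 * y)
  set n : (ι → ℝ) → ι → ℕ := fun x i => ⌊x i / y i - 1⌋₊
  set A : (ι → ℝ) → ℝ := fun x => ∏ i, (n x i : ℝ) / x i
  set Q : (ι → ℝ) → ℝ := fun x => ∏ i, ((n x i : ℝ) + 1) / x i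
  have hbound : ∀ᶠ x in Filter.pi fun _ => atTop,
      f x / ∏ i, x i ≤ A x * f y + M * (Q x - A x) := by
    filter_upwards [eventually_pi fun i => eventually_ge_atTop (y i)] with x hx
    exact hf.div_prod_le hy hM (n x) fun i => sub_natFloor_div_sub_one_mul_mem_Icc (hy i) (hx i)
  have hn : ∀ i, Tendsto (fun x : ι → ℝ => (n x i : ℝ) / x i) (Filter.pi fun _ => atTop)
      (𝓝 (y i)⁻¹) :=
    fun i => (tendsto_natFloor_div_sub_one_div_atTop (hy i)).comp (tendsto_eval_pi _ i)
  have hn1 : ∀ i, Tendsto (fun x : ι → ℝ => ((n x i : ℝ) + 1) / x i)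
      (Filter.pi fun _ => atTop) (𝓝 (y i)⁻¹) := fun i => by
    simpa [add_div] using (hn i).add (tendsto_inv_atTop_zero.comp (tendsto_eval_pi _ i))
  have hlim : Tendsto (fun x => A x * f y + M * (Q x - A x)) (Filter.pi fun _ => atTop)
      (𝓝 (f y / ∏ i, y i)) := by
    have hA := tendsto_finsetProd Finset.univ fun i _ => hn i
    have hQ := tendsto_finsetProd Finset.univ fun i _ => hn1 i
    convert (hA.mul_const (f y)).add ((hQ.sub hA).const_mul M) using 2
    simp [div_eq_inv_mul, Finset.prod_inv_distrib]
  exact (hbound.and (hlim.eventually (gt_mem_nhds hc))).mono fun x h => h.1.trans_lt h.2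

theorem ComponentwiseSubadditive.tendsto_div_prod (hf : ComponentwiseSubadditive f)
    (hmeas : AEMeasurable f (volume.restrict (posOrthant ι))) :
    Tendsto (fun x => ((f x / ∏ i, x i : ℝ) : EReal)) (Filter.pi fun _ => atTop)
      (𝓝 (⨅ x ∈ posOrthant ι, ((f x / ∏ i, x i : ℝ) : EReal))) :=
  tendsto_coe_biInf_of_eventually_lt (eventually_pi fun _ => eventually_gt_atTop 0)
    fun _ hy _ hc => hf.eventually_div_prod_lt hmeas hy hc

end Subadditive

section Reflection

variable {ι : Type*}

def orthant (w : ι → Bool) : Set (ι → ℝ) := {x | ∀ i, if w i then x i < 0 else 0 < x i}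

def reflect (w : ι → Bool) (x : ι → ℝ) : ι → ℝ := fun i => if w i then -x i else x i

variable (w : ι → Bool)

theorem reflect_involutive : Involutive (reflect w) := fun x =>
  funext fun i => by by_cases h : w i <;> simp [reflect, h]

theorem preimage_reflect_orthant : reflect w ⁻¹' orthant w = posOrthant ι :=
  Set.ext fun x => forall_congr' fun i => by by_cases h : w i <;> simp [reflect, h]

theorem image_reflect_posOrthant : reflect w '' posOrthant ι = orthant w := by
  rw [← preimage_reflect_orthant, Set.image_preimage_eq _ (reflect_involutive w).surjective]

theorem measurableSet_orthant [Countable ι] : MeasurableSet (orthant w) := by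
  simp only [orthant, Set.ofPred_forall]
  exact .iInter fun i => by
    split_ifs
    · exact measurableSet_lt (measurable_pi_apply i) measurable_const
    · exact measurableSet_lt measurable_const (measurable_pi_apply i)

theorem measurePreserving_reflect [Fintype ι] : MeasurePreserving (reflect w) :=
  volume_preserving_pi (f := fun i u => if w i then -u else u) fun i => by
    by_cases h : w i
    · simpa [h] using Measure.measurePreserving_neg (volume : Measure ℝ)
    · simp only [h]
      exact MeasurePreserving.id volume

theorem tendsto_reflect :
    Tendsto (reflect w) (Filter.pi fun i => if w i then atBot else atTop)
      (Filter.pi fun _ => atTop) :=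
  tendsto_pi.2 fun i => by
    have := tendsto_eval_pi (fun i => if w i then (atBot : Filter ℝ) else atTop) i
    by_cases h : w i
    · simp only [h, if_true] at this
      exact (tendsto_neg_atBot_atTop.comp this).congr fun x => by simp [reflect, h]
    · simpa [reflect, h] using this

theorem prod_reflect [Fintype ι] (hw : Even (Finset.univ.filter fun i => w i = true).card)
    (x : ι → ℝ) : ∏ i, reflect w x i = ∏ i, x i := by
  rw [show ∏ i, reflect w x i = ∏ i, if w i then -x i else x i from rfl, Finset.prod_ite,
    Finset.prod_neg, hw.neg_one_pow, one_mul, Finset.prod_filter_mul_prod_filter_not]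

theorem reflect_update [DecidableEq ι] (x : ι → ℝ) (i : ι) (a : ℝ) :
    reflect w (update x i a) = update (reflect w x) i (if w i then -a else a) := by
  ext j
  rcases eq_or_ne j i with rfl | hj <;> simp [reflect, *]

theorem componentwiseSubadditive_comp_reflect [DecidableEq ι] {f : (ι → ℝ) → ℝ}
    (hf : ∀ (i : ι) (x : ι → ℝ) (y : ℝ), x ∈ orthant w → (if w i then y < 0 else 0 < y) →
      f (update x i (x i + y)) ≤ f x + f (update x i y)) :
    ComponentwiseSubadditive (f ∘ reflect w) := fun i x y hx hy => by
  have hsign : if w i then (if w i then -y else y) < 0 else 0 < if w i then -y else y := by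
    by_cases h : w i <;> simp [h, hy]
  have := hf i (reflect w x) _ (by rwa [← Set.mem_preimage, preimage_reflect_orthant]) hsign
  by_cases h : w i <;> simpa [reflect_update, reflect, h, neg_add, add_comm] using this

end Reflection

theorem tendsto_div_prod_orthant {ι : Type*} [Fintype ι] [DecidableEq ι] {w : ι → Bool}
    (hw : Even (Finset.univ.filter fun i => w i = true).card) {f : (ι → ℝ) → ℝ}
    (hf : ∀ (i : ι) (x : ι → ℝ) (y : ℝ), x ∈ orthant w → (if w i then y < 0 else 0 < y) →
      f (update x i (x i + y)) ≤ f x + f (update x i y))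
    (hmeas : AEMeasurable f (volume.restrict (orthant w))) :
    Tendsto (fun x => ((f x / ∏ i, x i : ℝ) : EReal))
      (Filter.pi fun i => if w i then atBot else atTop)
      (𝓝 (⨅ x ∈ orthant w, ((f x / ∏ i, x i : ℝ) : EReal))) := by
  have hmeas' : AEMeasurable (f ∘ reflect w) (volume.restrict (posOrthant ι)) := by
    rw [← preimage_reflect_orthant w]
    exact hmeas.comp_quasiMeasurePreserving ((measurePreserving_reflect w).restrict_preimage
      (measurableSet_orthant w)).quasiMeasurePreserving
  convert ((componentwiseSubadditive_comp_reflect w hf).tendsto_div_prod hmeas').comp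
    (tendsto_reflect w) using 2
  · simp [prod_reflect w hw, reflect_involutive w _]
  · rw [← image_reflect_posOrthant w, iInf_image]
    simp [prod_reflect w hw]

theorem fekete_lemma_orthant_even_general
    (d : ℕ) (w : Fin d → Bool)
    (hw : Even (Finset.univ.filter fun i => w i = true).card)
    (f : (Fin d → ℝ) → ℝ)
    (hf : ∀ (i : Fin d) (x : Fin d → ℝ) (y : ℝ),
      (∀ j, if w j then x j < 0 else 0 < x j) →
      (if w i then y < 0 else 0 < y) →
      f (Function.update x i (x i + y)) ≤ f x + f (Function.update x i y))
    (hmeas : AEMeasurable f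
      (volume.restrict {x : Fin d → ℝ | ∀ i, if w i then x i < 0 else 0 < x i})) :
    (⨅ x ∈ {x : Fin d → ℝ | ∀ i, if w i then x i < 0 else 0 < x i},
        ((f x / ∏ i, x i : ℝ) : EReal)) ≠ ⊤ ∧
    Tendsto (fun x : Fin d → ℝ => ((f x / ∏ i, x i : ℝ) : EReal))
      (Filter.pi fun i => if w i then (atBot : Filter ℝ) else atTop)
      (𝓝 (⨅ x ∈ {x : Fin d → ℝ | ∀ i, if w i then x i < 0 else 0 < x i},
        ((f x / ∏ i, x i : ℝ) : EReal))) := by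
  have hone : reflect w 1 ∈ orthant w := by
    rw [← image_reflect_posOrthant w]
    exact Set.mem_image_of_mem _ fun _ => one_pos
  exact ⟨((biInf_le _ hone).trans_lt (EReal.coe_lt_top _)).ne,
    tendsto_div_prod_orthant hw hf hmeas⟩

/-- **Fekete's lemma in an orthant with evenly many negative coordinates.**
Let `w ∈ {0,1}^d` have an even number of ones and let `f` be componentwise
subadditive and Lebesgue measurable on the open orthant
`ℝ_w = {x | x i > 0 if w i = false, x i < 0 if w i = true}`.  Then
`f(x₁,…,x_d)/(x₁⋯x_d)` converges, along the directed set `ℛ_w` (coordinate `i`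
tending to `+∞` if `w i = false` and to `−∞` if `w i = true`), to its infimum
over `ℝ_w`, which is not `+∞` but can be `−∞`. -/
theorem fekete_lemma_orthant_even
    (d : ℕ) (hd : 1 ≤ d) (w : Fin d → Bool)
    (hw : Even (Finset.univ.filter fun i => w i = true).card)
    (f : (Fin d → ℝ) → ℝ)
    (hf : ∀ (i : Fin d) (x : Fin d → ℝ) (y : ℝ),
      (∀ j, if w j then x j < 0 else 0 < x j) →
      (if w i then y < 0 else 0 < y) →
      f (Function.update x i (x i + y)) ≤ f x + f (Function.update x i y))
    (hmeas : AEMeasurable f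
      (volume.restrict {x : Fin d → ℝ | ∀ i, if w i then x i < 0 else 0 < x i})) :
    (⨅ x ∈ {x : Fin d → ℝ | ∀ i, if w i then x i < 0 else 0 < x i},
        ((f x / ∏ i, x i : ℝ) : EReal)) ≠ ⊤ ∧
    Tendsto (fun x : Fin d → ℝ => ((f x / ∏ i, x i : ℝ) : EReal))
      (Filter.pi fun i => if w i then (atBot : Filter ℝ) else atTop)
      (𝓝 (⨅ x ∈ {x : Fin d → ℝ | ∀ i, if w i then x i < 0 else 0 < x i},
        ((f x / ∏ i, x i : ℝ) : EReal))) :=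
  fekete_lemma_orthant_even_general d w hw f hf hmeas
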